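/- Let η = M φ_{E_1} where E_1 = {1, 2, ..., m-1}. Then η ∈ ker M and ω_i η = t^{c(i)} η for 1 ≤ i ≤ N, where c(i) = i - m for 1 ≤ i ≤ m - 1 and c(i) = N - i for m ≤ i ≤ N. -/

import Mathlib

open Finset

noncomputable section

/-- The space of "fermionic" polynomials: formal linear combinations of
monomials `φ_E = θ_{i₁}⋯θ_{i_m}` indexed by finite sets `E` of indices. -/
abbrev SP (K : Type) [Field K] := Finset ℕ →₀ K

variable {K : Type} [Field K]

/-- basis monomial φ_E -/
def phi (K : Type) [Field K] (E : Finset ℕ) : SP K := Finsupp.single E 1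

/-- linear operator determined by its values on the basis {φ_E} -/
def opOf (v : Finset ℕ → SP K) : SP K →ₗ[K] SP K :=
  Finsupp.lsum K fun E => LinearMap.toSpanSingleton K (SP K) (v E)

/-- the image s_i E of E under the transposition swapping i, i+1 -/
def swapSet (i : ℕ) (E : Finset ℕ) : Finset ℕ := E.image (Equiv.swap i (i + 1))

/-- the Hecke algebra operator T_i acting on anti-commuting variables -/
def heckeT (t : K) (i : ℕ) : SP K →ₗ[K] SP K :=
  opOf fun E =>
    if i ∈ E then
      (if i + 1 ∈ E then -phi K E else phi K (swapSet i E))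
    else
      (if i + 1 ∈ E then (t - 1) • phi K E + t • phi K (swapSet i E)
       else t • phi K E)

/-- signed exterior multiplication θ̂_i -/
def thetaHat (K : Type) [Field K] (i : ℕ) : SP K →ₗ[K] SP K :=
  opOf fun E =>
    if i ∈ E then 0
    else ((-1 : K) ^ (E.filter (· < i)).card) • phi K (insert i E)

/-- formal fermionic derivative ∂_i -/
def fermD (K : Type) [Field K] (i : ℕ) : SP K →ₗ[K] SP K :=
  opOf fun E =>
    if i ∈ E then ((-1 : K) ^ (E.filter (· < i)).card) • phi K (E.erase i)
    else 0

/-- M = Σ_{i=1}^N θ̂_i -/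
def opM (K : Type) [Field K] (N : ℕ) : SP K →ₗ[K] SP K :=
  ∑ i ∈ Finset.Icc 1 N, thetaHat K i

/-- D = Σ_{i=1}^N t^{i-1} ∂_i -/
def opD (t : K) (N : ℕ) : SP K →ₗ[K] SP K :=
  ∑ i ∈ Finset.Icc 1 N, t ^ (i - 1) • fermD K i

/-- auxiliary recursion for the Jucys–Murphy operators (first arg = fuel) -/
def omegaAux (t : K) : ℕ → ℕ → SP K →ₗ[K] SP K
  | 0, _ => LinearMap.id
  | k + 1, i => t⁻¹ • (heckeT t i ∘ₗ omegaAux t k (i + 1) ∘ₗ heckeT t i)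

/-- Jucys–Murphy operator ω_i = t^{i-N} T_i ⋯ T_{N-1} T_{N-1} ⋯ T_i  (ω_N = 1),
via the recursion ω_N = 1, ω_i = t⁻¹ T_i ω_{i+1} T_i. -/
def omega (t : K) (N i : ℕ) : SP K →ₗ[K] SP K := omegaAux t (N - i) i

/-!
Both claims come from the algebra of `M`. The `θ̂_i` anticommute and square to zero, so `M² = 0`.
`M` commutes with each `T_k`, `1 ≤ k < N`, hence with each `ω_i`, and `T_k φ_{E₁}` is `t φ_{E₁}`
for `k ≥ m` and `-φ_{E₁}` for `k + 1 < m`; the recursion `ω_i = t⁻¹ T_i ω_{i+1} T_i` then gives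
`ω_i η = t^{N-i} η` for `i ≥ m` and reduces the case `i < m` to `ω_{m-1} η = t⁻¹ η`.
For the latter, with `B = {1, …, m-2}` and `ψ_l = φ_{B ∪ {l}}`, the `T_k` act on the `ψ_l` as on
a single particle, which gives `ω_{m-1} ψ_{m-1} = ψ_{m-1} + (1 - t⁻¹) ∑_{l ≥ m} ψ_l`. Since
`M φ_B = ± ∑_{l ≥ m-1} ψ_l` and `M² = 0`, applying `M` turns this into `η - (1 - t⁻¹) η`.
-/

lemma sum_mul_self_eq_zero_of_anticommute {R ι : Type*} [NonUnitalRing R] [DecidableEq ι]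
    (s : Finset ι) (f : ι → R) (hsq : ∀ i ∈ s, f i * f i = 0)
    (hanti : ∀ i ∈ s, ∀ j ∈ s, i ≠ j → f i * f j + f j * f i = 0) :
    (∑ i ∈ s, f i) * ∑ i ∈ s, f i = 0 := by
  induction s using Finset.induction_on with
  | empty => simp
  | insert a s ha ih =>
    have hcross : f a * ∑ i ∈ s, f i + (∑ i ∈ s, f i) * f a = 0 := by
      rw [mul_sum, sum_mul, ← sum_add_distrib]
      exact sum_eq_zero fun i hi =>
        hanti a (mem_insert_self a s) i (mem_insert_of_mem hi) (ne_of_mem_of_not_mem hi ha).symm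
    have hs : (∑ i ∈ s, f i) * ∑ i ∈ s, f i = 0 :=
      ih (fun i hi => hsq i (mem_insert_of_mem hi))
        (fun i hi j hj => hanti i (mem_insert_of_mem hi) j (mem_insert_of_mem hj))
    rw [sum_insert ha, add_mul, mul_add, mul_add, hsq a (mem_insert_self a s), hs, zero_add,
      add_zero, hcross]

lemma linearMap_ext_phi {f g : SP K →ₗ[K] SP K} (h : ∀ E, f (phi K E) = g (phi K E)) : f = g :=
  Finsupp.lhom_ext' fun E => LinearMap.ext_ring (h E)

lemma opOf_phi (v : Finset ℕ → SP K) (E : Finset ℕ) : opOf v (phi K E) = v E := by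
  simp [opOf, phi]

section Evaluation

variable {i k : ℕ} {E : Finset ℕ}

lemma thetaHat_phi_of_mem (h : i ∈ E) : thetaHat K i (phi K E) = 0 := by
  simp [thetaHat, opOf_phi, h]

lemma thetaHat_phi_of_notMem (h : i ∉ E) :
    thetaHat K i (phi K E) = (-1 : K) ^ (E.filter (· < i)).card • phi K (insert i E) := by
  simp [thetaHat, opOf_phi, h]

variable (t : K)

lemma heckeT_phi_of_mem_of_mem (hk : k ∈ E) (hk1 : k + 1 ∈ E) :
    heckeT t k (phi K E) = -phi K E := by
  simp [heckeT, opOf_phi, hk, hk1]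

lemma heckeT_phi_of_mem_of_notMem (hk : k ∈ E) (hk1 : k + 1 ∉ E) :
    heckeT t k (phi K E) = phi K (swapSet k E) := by
  simp [heckeT, opOf_phi, hk, hk1]

lemma heckeT_phi_of_notMem_of_mem (hk : k ∉ E) (hk1 : k + 1 ∈ E) :
    heckeT t k (phi K E) = (t - 1) • phi K E + t • phi K (swapSet k E) := by
  simp [heckeT, opOf_phi, hk, hk1]

lemma heckeT_phi_of_notMem_of_notMem (hk : k ∉ E) (hk1 : k + 1 ∉ E) :
    heckeT t k (phi K E) = t • phi K E := by
  simp [heckeT, opOf_phi, hk, hk1]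

end Evaluation

lemma card_filter_lt_insert {j : ℕ} {E : Finset ℕ} (hj : j ∉ E) (i : ℕ) :
    ((insert j E).filter (· < i)).card = (E.filter (· < i)).card + if j < i then 1 else 0 := by
  rw [filter_insert]
  split_ifs with h
  · rw [card_insert_of_notMem (by simp [hj])]
  · rfl

lemma thetaHat_mul_self (i : ℕ) : thetaHat K i * thetaHat K i = 0 := by
  refine linearMap_ext_phi fun E => ?_
  by_cases hi : i ∈ E
  · simp [thetaHat_phi_of_mem hi]
  · simp [thetaHat_phi_of_notMem hi, thetaHat_phi_of_mem (mem_insert_self i E)]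

lemma thetaHat_anticommute {i j : ℕ} (hij : i ≠ j) :
    thetaHat K i * thetaHat K j + thetaHat K j * thetaHat K i = 0 := by
  refine linearMap_ext_phi fun E => ?_
  simp only [LinearMap.add_apply, Module.End.mul_apply, LinearMap.zero_apply]
  by_cases hi : i ∈ E
  · by_cases hj : j ∈ E <;> simp [thetaHat_phi_of_mem, thetaHat_phi_of_notMem, hi, hj]
  by_cases hj : j ∈ E
  · simp [thetaHat_phi_of_mem, thetaHat_phi_of_notMem, hi, hj]
  have hij' : i ∉ insert j E := by simp [hi, hij]
  have hji' : j ∉ insert i E := by simp [hj, hij.symm]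
  rw [thetaHat_phi_of_notMem hi, thetaHat_phi_of_notMem hj, map_smul, map_smul,
    thetaHat_phi_of_notMem hij', thetaHat_phi_of_notMem hji', card_filter_lt_insert hj,
    card_filter_lt_insert hi, insert_comm, smul_smul, smul_smul, ← add_smul]
  convert zero_smul K _
  rcases hij.lt_or_gt with h | h <;> simp [h, h.not_gt, pow_succ] <;> ring

lemma opM_mul_self (N : ℕ) : opM K N * opM K N = 0 :=
  sum_mul_self_eq_zero_of_anticommute (f := thetaHat K) _ (fun i _ => thetaHat_mul_self i)
    (fun _ _ _ _ hij => thetaHat_anticommute hij)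

section SwapSet

variable {i k : ℕ} {B E : Finset ℕ}

lemma mem_swapSet {x : ℕ} : x ∈ swapSet k E ↔ Equiv.swap k (k + 1) x ∈ E := by
  rw [swapSet, ← Equiv.coe_toEmbedding, ← map_eq_image, mem_map_equiv, Equiv.symm_swap]
  rfl

lemma mem_swapSet_of_ne (hik : i ≠ k) (hik1 : i ≠ k + 1) : i ∈ swapSet k E ↔ i ∈ E := by
  rw [mem_swapSet, Equiv.swap_apply_of_ne_of_ne hik hik1]

lemma swapSet_eq_self (hk : k ∉ E) (hk1 : k + 1 ∉ E) : swapSet k E = E := by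
  ext x
  rw [mem_swapSet]
  rcases eq_or_ne x k with rfl | hxk
  · simp [hk, hk1]
  rcases eq_or_ne x (k + 1) with rfl | hxk1
  · simp [hk, hk1]
  rw [Equiv.swap_apply_of_ne_of_ne hxk hxk1]

lemma swapSet_insert_of_ne (hik : i ≠ k) (hik1 : i ≠ k + 1) :
    swapSet k (insert i E) = insert i (swapSet k E) := by
  rw [swapSet, image_insert, Equiv.swap_apply_of_ne_of_ne hik hik1, swapSet]

lemma swapSet_insert_self (hk : k ∉ B) (hk1 : k + 1 ∉ B) :
    swapSet k (insert k B) = insert (k + 1) B := by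
  rw [swapSet, image_insert, Equiv.swap_apply_left, ← swapSet, swapSet_eq_self hk hk1]

lemma swapSet_insert_succ (hk : k ∉ B) (hk1 : k + 1 ∉ B) :
    swapSet k (insert (k + 1) B) = insert k B := by
  rw [swapSet, image_insert, Equiv.swap_apply_right, ← swapSet, swapSet_eq_self hk hk1]

lemma mem_swapSet_self : k ∈ swapSet k E ↔ k + 1 ∈ E := by
  rw [mem_swapSet, Equiv.swap_apply_left]

lemma succ_mem_swapSet : k + 1 ∈ swapSet k E ↔ k ∈ E := by
  rw [mem_swapSet, Equiv.swap_apply_right]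

lemma insert_swapSet_of_mem_of_notMem (hk : k ∈ E) (hk1 : k + 1 ∉ E) :
    insert k (swapSet k E) = insert (k + 1) E := by
  rw [← insert_erase hk, swapSet_insert_self (notMem_erase k E) (fun h => hk1 (mem_of_mem_erase h)),
    insert_comm]

lemma insert_succ_swapSet_of_notMem_of_mem (hk : k ∉ E) (hk1 : k + 1 ∈ E) :
    insert (k + 1) (swapSet k E) = insert k E := by
  rw [← insert_erase hk1,
    swapSet_insert_succ (fun h => hk (mem_of_mem_erase h)) (notMem_erase (k + 1) E), insert_comm]

lemma card_filter_lt_swapSet (hik1 : i ≠ k + 1) :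
    ((swapSet k E).filter (· < i)).card = (E.filter (· < i)).card := by
  have hlt : ∀ x, Equiv.swap k (k + 1) x < i ↔ x < i := by
    intro x
    rcases eq_or_ne x k with rfl | hxk
    · rw [Equiv.swap_apply_left]; omega
    rcases eq_or_ne x (k + 1) with rfl | hxk1
    · rw [Equiv.swap_apply_right]; omega
    · rw [Equiv.swap_apply_of_ne_of_ne hxk hxk1]
  rw [swapSet, filter_image, card_image_of_injective _ (Equiv.injective _)]
  simp only [hlt]

lemma card_filter_lt_succ (E : Finset ℕ) (k : ℕ) :
    (E.filter (· < k + 1)).card = (E.filter (· < k)).card + if k ∈ E then 1 else 0 := by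
  split_ifs with hk
  · rw [← card_insert_of_notMem (s := E.filter (· < k)) (a := k) (by simp)]
    congr 1
    ext x
    simp only [mem_filter, mem_insert]
    grind
  · congr 1
    ext x
    simp only [mem_filter]
    grind

end SwapSet

section Commutation

variable (t : K)

lemma commute_thetaHat_heckeT {i k : ℕ} (hik : i ≠ k) (hik1 : i ≠ k + 1) :
    Commute (thetaHat K i) (heckeT t k) := by
  refine linearMap_ext_phi fun E => ?_
  simp only [Module.End.mul_apply]
  have hk : k ∈ insert i E ↔ k ∈ E := by simp [hik.symm]
  have hk1 : k + 1 ∈ insert i E ↔ k + 1 ∈ E := by simp [hik1.symm]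
  by_cases hiE : i ∈ E <;> by_cases hkE : k ∈ E <;> by_cases hk1E : k + 1 ∈ E <;>
    simp [heckeT_phi_of_mem_of_mem, heckeT_phi_of_mem_of_notMem, heckeT_phi_of_notMem_of_mem,
      heckeT_phi_of_notMem_of_notMem, thetaHat_phi_of_mem, thetaHat_phi_of_notMem,
      mem_swapSet_of_ne hik hik1, card_filter_lt_swapSet hik1, swapSet_insert_of_ne hik hik1,
      hiE, hkE, hk1E, hk, hk1, smul_comm t, smul_comm (t - 1)]

lemma commute_thetaHat_add_heckeT (k : ℕ) :
    Commute (thetaHat K k + thetaHat K (k + 1)) (heckeT t k) := by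
  refine linearMap_ext_phi fun E => ?_
  simp only [Module.End.mul_apply, LinearMap.add_apply]
  have hfilter : ((swapSet k E).filter (· < k)).card = (E.filter (· < k)).card :=
    card_filter_lt_swapSet (by omega)
  by_cases hk : k ∈ E <;> by_cases hk1 : k + 1 ∈ E
  · simp [heckeT_phi_of_mem_of_mem, thetaHat_phi_of_mem, hk, hk1]
  · rw [heckeT_phi_of_mem_of_notMem t hk hk1, thetaHat_phi_of_mem hk,
      thetaHat_phi_of_notMem (mem_swapSet_self.not.2 hk1),
      thetaHat_phi_of_mem (succ_mem_swapSet.2 hk), thetaHat_phi_of_notMem hk1, zero_add, add_zero,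
      map_smul, heckeT_phi_of_mem_of_mem t (mem_insert_of_mem hk) (mem_insert_self _ _),
      insert_swapSet_of_mem_of_notMem hk hk1, hfilter, card_filter_lt_succ, if_pos hk, pow_succ]
    module
  · rw [heckeT_phi_of_notMem_of_mem t hk hk1, map_add, map_add, map_smul, map_smul, map_smul,
      map_smul, thetaHat_phi_of_notMem hk, thetaHat_phi_of_mem hk1,
      thetaHat_phi_of_mem (mem_swapSet_self.2 hk1),
      thetaHat_phi_of_notMem (succ_mem_swapSet.not.2 hk)]
    simp only [smul_zero, add_zero, zero_add, map_smul]
    rw [heckeT_phi_of_mem_of_mem t (mem_insert_self _ _) (mem_insert_of_mem hk1),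
      insert_succ_swapSet_of_notMem_of_mem hk hk1, card_filter_lt_succ,
      if_pos (mem_swapSet_self.2 hk1), hfilter, pow_succ]
    module
  · have hk1k : k + 1 ∉ insert k E := by simp [hk1]
    have hkk1 : k ∉ insert (k + 1) E := by simp [hk]
    rw [heckeT_phi_of_notMem_of_notMem t hk hk1, map_smul, map_smul, thetaHat_phi_of_notMem hk,
      thetaHat_phi_of_notMem hk1, map_add, map_smul, map_smul,
      heckeT_phi_of_mem_of_notMem t (mem_insert_self _ _) hk1k,
      heckeT_phi_of_notMem_of_mem t hkk1 (mem_insert_self _ _), swapSet_insert_self hk hk1,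
      swapSet_insert_succ hk hk1, card_filter_lt_succ, if_neg hk, add_zero]
    module

lemma commute_opM_heckeT {N k : ℕ} (hk : 1 ≤ k) (hkN : k + 1 ≤ N) :
    Commute (opM K N) (heckeT t k) := by
  have hpair : {k, k + 1} ⊆ Icc 1 N := by
    intro x hx
    simp only [mem_insert, mem_singleton] at hx
    simp only [mem_Icc]
    omega
  rw [opM, ← sum_sdiff hpair, sum_pair (by omega)]
  refine Commute.add_left (Commute.sum_left _ _ _ fun i hi => ?_) (commute_thetaHat_add_heckeT t k)
  simp only [mem_sdiff, mem_insert, mem_singleton, not_or] at hi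
  exact commute_thetaHat_heckeT t hi.2.1 hi.2.2

end Commutation

section JucysMurphy

variable (t : K) {N : ℕ}

lemma omega_of_le {i : ℕ} (h : N ≤ i) : omega t N i = 1 := by
  rw [omega, Nat.sub_eq_zero_of_le h]
  rfl

lemma omega_of_lt {i : ℕ} (h : i < N) :
    omega t N i = t⁻¹ • (heckeT t i * omega t N (i + 1) * heckeT t i) := by
  rw [omega, omega, show N - i = N - (i + 1) + 1 by omega]
  rfl

lemma commute_opM_omega {i : ℕ} (hi : 1 ≤ i) : Commute (opM K N) (omega t N i) := by
  induction hd : N - i generalizing i with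
  | zero =>
    rw [omega_of_le t (show N ≤ i by omega)]
    exact Commute.one_right _
  | succ d ih =>
    rw [omega_of_lt t (by omega)]
    have hT := commute_opM_heckeT t hi (by omega : i + 1 ≤ N)
    exact ((hT.mul_right (ih (by omega) (by omega))).mul_right hT).smul_right _

lemma omega_apply_of_heckeT_apply {i : ℕ} (hi : i < N) {v : SP K} {s c : K}
    (hT : heckeT t i v = s • v) (hω : omega t N (i + 1) v = c • v) :
    omega t N i v = (t⁻¹ * s * c * s) • v := by
  rw [omega_of_lt t hi, LinearMap.smul_apply, Module.End.mul_apply, Module.End.mul_apply, hT,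
    map_smul, hω, map_smul, map_smul, hT, smul_smul, smul_smul, smul_smul, mul_assoc, mul_assoc]

lemma omega_apply_of_forall_heckeT_apply_eq_smul {i : ℕ} {v : SP K}
    (hT : ∀ k, i ≤ k → k < N → heckeT t k v = t • v) : omega t N i v = t ^ (N - i) • v := by
  induction hd : N - i generalizing i with
  | zero => rw [omega_of_le t (by omega), Module.End.one_apply, pow_zero, one_smul]
  | succ d ih =>
    rw [omega_apply_of_heckeT_apply t (by omega) (hT i le_rfl (by omega))
      (ih (fun k hk hkN => hT k (by omega) hkN) (by omega))]
    congr 1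
    field_simp
    ring

lemma omega_apply_of_forall_heckeT_apply_eq_neg {i j : ℕ} (hij : i ≤ j) (hjN : j ≤ N)
    {v : SP K} {c : K} (hT : ∀ k, i ≤ k → k < j → heckeT t k v = -v)
    (hω : omega t N j v = c • v) : omega t N i v = (t⁻¹ ^ (j - i) * c) • v := by
  induction hd : j - i generalizing i with
  | zero => rwa [show i = j by omega, pow_zero, one_mul]
  | succ d ih =>
    rw [omega_apply_of_heckeT_apply t (by omega) (by rw [hT i le_rfl (by omega), neg_one_smul])
      (ih (by omega) (fun k hk hkj => hT k (by omega) hkj) (by omega))]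
    ring_nf

end JucysMurphy

section OneParticle

variable (t : K) {B : Finset ℕ} {k : ℕ}

lemma heckeT_phi_insert_self (hk : k ∉ B) (hk1 : k + 1 ∉ B) :
    heckeT t k (phi K (insert k B)) = phi K (insert (k + 1) B) := by
  rw [heckeT_phi_of_mem_of_notMem t (mem_insert_self k B) (by simp [hk1]),
    swapSet_insert_self hk hk1]

lemma heckeT_phi_insert_succ (hk : k ∉ B) (hk1 : k + 1 ∉ B) :
    heckeT t k (phi K (insert (k + 1) B)) =
      (t - 1) • phi K (insert (k + 1) B) + t • phi K (insert k B) := by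
  rw [heckeT_phi_of_notMem_of_mem t (by simp [hk]) (mem_insert_self (k + 1) B),
    swapSet_insert_succ hk hk1]

lemma heckeT_phi_insert_of_ne (hk : k ∉ B) (hk1 : k + 1 ∉ B) {l : ℕ} (hlk : l ≠ k)
    (hlk1 : l ≠ k + 1) : heckeT t k (phi K (insert l B)) = t • phi K (insert l B) :=
  heckeT_phi_of_notMem_of_notMem t (by simp [hk, hlk.symm]) (by simp [hk1, hlk1.symm])

lemma omega_phi_insert (ht : t ≠ 0) {N j : ℕ} (hB : ∀ x ∈ B, x < j) (hjN : j ≤ N) :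
    omega t N j (phi K (insert j B)) =
      phi K (insert j B) + (1 - t⁻¹) • ∑ l ∈ Ioc j N, phi K (insert l B) := by
  induction hd : N - j generalizing j with
  | zero =>
    rw [omega_of_le t (by omega), Ioc_eq_empty (by omega), sum_empty, smul_zero, add_zero]
    rfl
  | succ d ih =>
    have hj : j ∉ B := fun h => (hB j h).false
    have hj1 : j + 1 ∉ B := fun h => by have := hB _ h; omega
    have hrest : ∀ l ∈ Ioc (j + 1) N, heckeT t j (phi K (insert l B)) = t • phi K (insert l B) :=
      fun l hl => heckeT_phi_insert_of_ne t hj hj1 (by simp at hl; omega) (by simp at hl; omega)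
    rw [omega_of_lt t (by omega), LinearMap.smul_apply, Module.End.mul_apply,
      Module.End.mul_apply, heckeT_phi_insert_self t hj hj1,
      ih (fun x hx => (hB x hx).trans j.lt_succ_self) (by omega) (by omega), map_add, map_smul,
      map_sum, sum_congr rfl hrest, heckeT_phi_insert_succ t hj hj1,
      ← insert_Ioc_add_one_left_eq_Ioc (show j < N by omega), sum_insert (by simp), ← smul_sum]
    match_scalars <;> field_simp

end OneParticle

lemma opM_phi_Icc (N a : ℕ) :
    opM K N (phi K (Icc 1 a)) = (-1 : K) ^ a • ∑ l ∈ Ioc a N, phi K (insert l (Icc 1 a)) := by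
  have hsub : Ioc a N ⊆ Icc 1 N := fun l hl => by simp only [mem_Ioc, mem_Icc] at hl ⊢; omega
  rw [opM, LinearMap.sum_apply, ← sum_subset hsub fun l hlN hl => ?_, smul_sum]
  · refine sum_congr rfl fun l hl => ?_
    simp only [mem_Ioc] at hl
    rw [thetaHat_phi_of_notMem (by simp; omega), filter_true_of_mem (by simp; omega),
      Nat.card_Icc, Nat.add_sub_cancel]
  · simp only [mem_Ioc, mem_Icc] at hlN hl
    exact thetaHat_phi_of_mem (by simp; omega)

lemma opM_sum_phi_insert_Icc {N a : ℕ} (haN : a + 1 ≤ N) :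
    opM K N (∑ l ∈ Ioc (a + 1) N, phi K (insert l (Icc 1 a))) =
      -opM K N (phi K (Icc 1 (a + 1))) := by
  have h := congrArg (opM K N) (opM_phi_Icc (K := K) N a)
  rw [← Module.End.mul_apply, opM_mul_self, LinearMap.zero_apply,
    ← insert_Ioc_add_one_left_eq_Ioc (by omega), sum_insert (by simp),
    insert_Icc_right_eq_Icc_add_one (by omega), map_smul, map_add, eq_comm,
    smul_eq_zero_iff_right (pow_ne_zero _ (by norm_num))] at h
  exact eq_neg_of_add_eq_zero_right h

lemma omega_opM_phi_Icc (t : K) (ht : t ≠ 0) {N a : ℕ} (haN : a + 1 ≤ N) :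
    omega t N (a + 1) (opM K N (phi K (Icc 1 (a + 1)))) =
      t⁻¹ • opM K N (phi K (Icc 1 (a + 1))) := by
  rw [← Module.End.mul_apply, ← (commute_opM_omega t (by omega)).eq, Module.End.mul_apply,
    ← insert_Icc_right_eq_Icc_add_one (by omega),
    omega_phi_insert t ht (fun x hx => by simp at hx; omega) haN,
    insert_Icc_right_eq_Icc_add_one (by omega), map_add, map_smul, opM_sum_phi_insert_Icc haN]
  module

theorem eta_eigenvector_general (K : Type) [Field K] (t : K) (ht : t ≠ 0) (N m : ℕ)
    (hmN : m ≤ N) :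
    opM K N (opM K N (phi K (Finset.Icc 1 (m - 1)))) = 0 ∧
    ∀ i, 1 ≤ i → i ≤ N →
      omega t N i (opM K N (phi K (Finset.Icc 1 (m - 1)))) =
        (t ^ (if i < m then (i : ℤ) - m else (N : ℤ) - i)) •
          opM K N (phi K (Finset.Icc 1 (m - 1))) := by
  have heckeT_eta : ∀ k, 1 ≤ k → k + 1 ≤ N → heckeT t k (opM K N (phi K (Icc 1 (m - 1)))) =
      opM K N (heckeT t k (phi K (Icc 1 (m - 1)))) := fun k hk hkN =>
    (LinearMap.congr_fun (commute_opM_heckeT t hk hkN).eq _).symm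
  refine ⟨by rw [← Module.End.mul_apply, opM_mul_self, LinearMap.zero_apply], fun i hi hiN => ?_⟩
  split_ifs with him
  · obtain ⟨a, rfl⟩ : ∃ a, m = a + 2 := ⟨m - 2, by omega⟩
    rw [show a + 2 - 1 = a + 1 by omega] at heckeT_eta ⊢
    rw [omega_apply_of_forall_heckeT_apply_eq_neg t (show i ≤ a + 1 by omega) (by omega)
      (fun k hik hka => ?_) (omega_opM_phi_Icc t ht (a := a) (by omega))]
    · congr 1
      rw [← pow_succ, inv_pow, ← zpow_natCast, ← zpow_neg]
      congr 1
      omega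
    · rw [heckeT_eta k (by omega) (by omega),
        heckeT_phi_of_mem_of_mem t (by simp; omega) (by simp; omega), map_neg]
  · rw [omega_apply_of_forall_heckeT_apply_eq_smul t fun k hik hkN => ?_, ← zpow_natCast,
      Nat.cast_sub hiN]
    · rw [heckeT_eta k (by omega) (by omega),
        heckeT_phi_of_notMem_of_notMem t (by simp; omega) (by simp; omega), map_smul]

/-- η = M φ_{E₁} with E₁ = {1, …, m-1} lies in ker M and is a
simultaneous ω_i-eigenvector: ω_i η = t^{c(i)} η with c(i) = i-m for
1 ≤ i ≤ m-1 and c(i) = N-i for m ≤ i ≤ N. -/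
theorem eta_eigenvector (K : Type) [Field K] (t : K) (ht : t ≠ 0) (N m : ℕ)
    (hm1 : 1 ≤ m) (hmN : m ≤ N) :
    opM K N (opM K N (phi K (Finset.Icc 1 (m - 1)))) = 0 ∧
    ∀ i, 1 ≤ i → i ≤ N →
      omega t N i (opM K N (phi K (Finset.Icc 1 (m - 1)))) =
        (t ^ (if i < m then (i : ℤ) - m else (N : ℤ) - i)) •
          opM K N (phi K (Finset.Icc 1 (m - 1))) :=
  eta_eigenvector_general K t ht N m hmN
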